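/- arXiv:2412.20941 — 2 statements merged into one kernel-verified Lean document; each statement's English description precedes it below -/
import Mathlib

section
/- Let Γ be a group and H ≤ Γ a subgroup satisfying the following separability property: for every γ ∈ Γ with γ ∉ H there exists a subgroup K of Γ of finite index with H ≤ K and γ ∉ K. Then for every finite subset S of the left-coset space Γ/H there exists a subgroup G of Γ of finite index with H ≤ G such that the canonical projection Γ/H → Γ/G, sending the coset γH to the coset γG, is injective on S. -/
/-- If a subgroup `H ≤ Γ` is separable (every element outside `H` can be excluded by a
finite-index subgroup containing `H`), then for every finite subset `S` of the coset space
`Γ/H` there is a finite-index subgroup `G` with `H ≤ G` such that the canonical projection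
`Γ/H → Γ/G` is injective on `S`. -/
theorem separable_subgroup_finite_cover_injective
    {Γ : Type*} [Group Γ] (H : Subgroup Γ)
    (hsep : ∀ γ : Γ, γ ∉ H → ∃ K : Subgroup Γ, K.FiniteIndex ∧ H ≤ K ∧ γ ∉ K)
    (S : Set (Γ ⧸ H)) (hS : S.Finite) :
    ∃ G : Subgroup Γ, G.FiniteIndex ∧ H ≤ G ∧
      ∀ a b : Γ, (QuotientGroup.mk a : Γ ⧸ H) ∈ S → (QuotientGroup.mk b : Γ ⧸ H) ∈ S →
        (QuotientGroup.mk a : Γ ⧸ G) = (QuotientGroup.mk b : Γ ⧸ G) →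
        (QuotientGroup.mk a : Γ ⧸ H) = (QuotientGroup.mk b : Γ ⧸ H) := by
  classical
  -- choose, for each pair of cosets, a separating subgroup (or ⊤ if not needed)
  have key : ∀ p : (Γ ⧸ H) × (Γ ⧸ H), ∃ K : Subgroup Γ, K.FiniteIndex ∧ H ≤ K ∧
      (p.1 ≠ p.2 → (Quotient.out p.1)⁻¹ * (Quotient.out p.2) ∉ K) := by
    intro p
    by_cases h : p.1 = p.2
    · exact ⟨⊤, ⟨by simp [Subgroup.index_top]⟩, le_top, fun hne => absurd h hne⟩
    · have hγ : (Quotient.out p.1)⁻¹ * (Quotient.out p.2) ∉ H := by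
        intro hmem
        apply h
        rw [← QuotientGroup.out_eq' p.1, ← QuotientGroup.out_eq' p.2]
        exact (QuotientGroup.eq (s := H)).2 hmem
      obtain ⟨K, hK1, hK2, hK3⟩ := hsep _ hγ
      exact ⟨K, hK1, hK2, fun _ => hK3⟩
  choose K hKfin hKle hKsep using key
  refine ⟨⨅ p ∈ (hS.prod hS).toFinset, K p, ?_, ?_, ?_⟩
  · exact Subgroup.finiteIndex_iInf' K fun p _ => hKfin p
  · exact le_iInf fun p => le_iInf fun _ => hKle p
  · intro a b ha hb hab
    by_contra hne
    set p : (Γ ⧸ H) × (Γ ⧸ H) := (QuotientGroup.mk a, QuotientGroup.mk b) with hp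
    have hpS : p ∈ (hS.prod hS).toFinset := by
      simp [hp, Set.mem_prod, ha, hb]
    have hG : (⨅ p ∈ (hS.prod hS).toFinset, K p) ≤ K p := by
      exact biInf_le K hpS
    -- a⁻¹ * b ∈ G
    have hab' : a⁻¹ * b ∈ K p := hG ((QuotientGroup.eq (s := _)).1 hab)
    -- relate out' to a, b via H ≤ K p
    have h1 : (Quotient.out p.1)⁻¹ * a ∈ H := (QuotientGroup.eq (s := H)).1 (QuotientGroup.out_eq' p.1)
    have h2 : (Quotient.out p.2)⁻¹ * b ∈ H := (QuotientGroup.eq (s := H)).1 (QuotientGroup.out_eq' p.2)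
    have : (Quotient.out p.1)⁻¹ * (Quotient.out p.2) ∈ K p := by
      have e : (Quotient.out p.1)⁻¹ * (Quotient.out p.2)
          = ((Quotient.out p.1)⁻¹ * a) * (a⁻¹ * b) * ((Quotient.out p.2)⁻¹ * b)⁻¹ := by group
      rw [e]
      exact mul_mem (mul_mem (hKle p h1) hab') (inv_mem (hKle p h2))
    exact hKsep p hne this
end

section
/- Equip ℝ⁴ with coordinates (θ,p,x,y) and with the bilinear alternating form ω determined on the standard basis by ω(e_p,e_θ) = 1, ω(e_x,e_y) = 1, and all other pairings of distinct basis vectors equal to zero. Then there exists a linear automorphism F of ℝ⁴ preserving ω (i.e. ω(Fu,Fv) = ω(u,v) for all u,v), satisfying F(v + c·e_θ) = F(v) + c·e_θ for all v ∈ ℝ⁴ and c ∈ ℝ (so F commutes with translations in the θ-coordinate), and mapping the plane {x = 0, y = 0} onto the plane {(θ,p,x,y) ∈ ℝ⁴ : x = −y and p = y}. -/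
/-- The bilinear alternating form on `ℝ⁴` with coordinates `(θ, p, x, y)`
(indexed `0, 1, 2, 3`) determined by `ω(e_p, e_θ) = 1`, `ω(e_x, e_y) = 1`, and all
other pairings of distinct basis vectors equal to zero. -/
def omegaCyl (u v : Fin 4 → ℝ) : ℝ :=
  u 1 * v 0 - u 0 * v 1 + (u 2 * v 3 - u 3 * v 2)

/-- The first standard basis vector `e_θ` of `ℝ⁴`. -/
def eTheta : Fin 4 → ℝ := Pi.single 0 1

/-- Explicit linear symplectomorphism `(θ,p,x,y) ↦ (θ+y, p, −p+x+y, p−x)`. -/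
noncomputable def Fcyl : (Fin 4 → ℝ) ≃ₗ[ℝ] (Fin 4 → ℝ) where
  toFun v := ![v 0 + v 3, v 1, -v 1 + v 2 + v 3, v 1 - v 2]
  invFun w := ![w 0 - w 2 - w 3, w 1, w 1 - w 3, w 2 + w 3]
  map_add' u v := by
    funext i
    fin_cases i <;> simp [Pi.add_apply] <;> ring
  map_smul' c v := by
    funext i
    fin_cases i <;> simp [Pi.smul_apply, smul_eq_mul] <;> ring
  left_inv v := by
    funext i
    fin_cases i <;> simp <;> ring
  right_inv w := by
    funext i
    fin_cases i <;> simp <;> ring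

/-- There is a linear automorphism of `ℝ⁴` preserving `ω`, commuting with
translations in the `θ`-coordinate, and taking the plane `{x = 0, y = 0}` onto
the plane `{x = −y, p = y}`. -/
theorem exists_linear_symplectomorphism_cylinder_plane_to_section :
    ∃ F : (Fin 4 → ℝ) ≃ₗ[ℝ] (Fin 4 → ℝ),
      (∀ u v : Fin 4 → ℝ, omegaCyl (F u) (F v) = omegaCyl u v) ∧
      (∀ (v : Fin 4 → ℝ) (c : ℝ), F (v + c • eTheta) = F v + c • eTheta) ∧
      F '' {v : Fin 4 → ℝ | v 2 = 0 ∧ v 3 = 0} =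
        {v : Fin 4 → ℝ | v 2 = -v 3 ∧ v 1 = v 3} := by
  refine ⟨Fcyl, ?_, ?_, ?_⟩
  · intro u v
    simp only [omegaCyl, Fcyl, LinearEquiv.coe_mk, Equiv.coe_fn_mk]
    norm_num [Matrix.cons_val_zero, Matrix.cons_val_one, Matrix.head_cons]
    simp
    ring
  · intro v c
    funext i
    simp only [Fcyl, eTheta, LinearEquiv.coe_mk, Equiv.coe_fn_mk, Pi.add_apply,
      Pi.smul_apply, smul_eq_mul]
    fin_cases i <;> simp [Pi.single_apply] <;> ring
  · ext w
    constructor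
    · rintro ⟨v, ⟨h2, h3⟩, rfl⟩
      simp only [Fcyl, LinearEquiv.coe_mk, Equiv.coe_fn_mk, Set.mem_setOf_eq]
      constructor <;> simp [h2, h3] <;> ring
    · rintro ⟨h2, h1⟩
      refine ⟨![w 0, w 1, 0, 0], ⟨rfl, rfl⟩, ?_⟩
      funext i
      simp only [Fcyl, LinearEquiv.coe_mk, Equiv.coe_fn_mk]
      fin_cases i <;> simp <;> linarith [h2, h1]
end
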